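/- arXiv:1809.02892 — 2 statements merged into one kernel-verified Lean document; each statement's English description precedes it below -/
import Mathlib

section
/- Let M ≥ 1 and N ≥ 1 be integers, let δ ≥ 0 and Q ≥ 0 be reals, and let j be an integer with 1 ≤ j ≤ N. Consider the n = N jobs with r_i = δ for all i; p_i = δ for i ≠ j and p_j = Q − Q/M; q_i = Q/M for i ≠ j and q_j = Q/M + N·δ. Then the delivery-makespan (critical path length of the corresponding dependency graph in which task τ_1's critical section is the j-th in the chain) equals j·δ + Q + N·δ. -/
/-!
All jobs are released at the same time `δ`, so once the machine starts it never idles and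
`F_i` is `δ` plus the total processing time of the first `i` jobs. Job `j` is the only job
whose processing time differs from `δ`, hence `F_i = (i + 1)δ` before it and
`F_i = iδ + Q - Q/M` from it on. Adding the delivery times, every job but `j` is delivered by
`Nδ + Q`, while job `j` is delivered exactly at `jδ + Q + Nδ`.
-/

/-- Completion times of jobs `1, …, n` processed non-preemptively in index order. -/
noncomputable def complTime (r p : ℕ → ℝ) : ℕ → ℝ
  | 0 => 0
  | 1 => r 1 + p 1
  | (i + 2) => max (complTime r p (i + 1)) (r (i + 2)) + p (i + 2)

theorem complTime_eq_add_sum_of_release_eq {r p : ℕ → ℝ} {c : ℝ} (hr : ∀ i, r i = c)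
    (hp : ∀ i, 0 ≤ p i) {i : ℕ} (hi : 1 ≤ i) :
    complTime r p i = c + ∑ k ∈ Finset.Icc 1 i, p k := by
  induction i, hi using Nat.le_induction with
  | base => simp [complTime, hr]
  | succ i hi ih =>
    obtain ⟨k, rfl⟩ : ∃ k, i = k + 1 := ⟨i - 1, by omega⟩
    have h_busy : c ≤ complTime r p (k + 1) := by
      rw [ih]
      exact le_add_of_nonneg_right (Finset.sum_nonneg fun l _ => hp l)
    calc complTime r p (k + 2) = max (complTime r p (k + 1)) (r (k + 2)) + p (k + 2) := rfl
      _ = c + ∑ l ∈ Finset.Icc 1 (k + 2), p l := by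
        rw [hr, max_eq_left h_busy, ih, Finset.sum_Icc_succ_top (b := k + 1) (by omega),
          add_assoc]

theorem Finset.sum_eq_card_nsmul_add_ite_of_forall_ne {ι M : Type*} [DecidableEq ι]
    [AddCommGroup M] (s : Finset ι) {f : ι → M} {j : ι} {c : M}
    (hf : ∀ i, i ≠ j → f i = c) :
    ∑ i ∈ s, f i = s.card • c + if j ∈ s then f j - c else 0 := by
  have h_dev : ∀ i, f i - c = if j = i then f j - c else 0 := by
    intro i
    split_ifs with h
    · rw [h]
    · rw [hf i (Ne.symm h), sub_self]
  calc ∑ i ∈ s, f i = ∑ i ∈ s, (c + (f i - c)) := by simp only [add_sub_cancel]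
    _ = s.card • c + if j ∈ s then f j - c else 0 := by
      rw [Finset.sum_add_distrib, Finset.sum_const, Finset.sum_congr rfl fun i _ => h_dev i,
        Finset.sum_ite_eq]

theorem complTime_eq_of_release_eq_of_forall_ne {r p : ℕ → ℝ} {δ : ℝ} {j : ℕ}
    (hδ : 0 ≤ δ) (hpj : 0 ≤ p j) (hj : 1 ≤ j) (hr : ∀ i, r i = δ)
    (hp : ∀ i, i ≠ j → p i = δ) {i : ℕ} (hi : 1 ≤ i) :
    complTime r p i = (i + 1) * δ + if j ≤ i then p j - δ else 0 := by
  have hp0 : ∀ k, 0 ≤ p k := fun k => by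
    rcases eq_or_ne k j with rfl | hk
    · exact hpj
    · rw [hp k hk]; exact hδ
  rw [complTime_eq_add_sum_of_release_eq hr hp0 hi,
    Finset.sum_eq_card_nsmul_add_ite_of_forall_ne _ hp, Nat.card_Icc, nsmul_eq_mul]
  simp only [add_tsub_cancel_right, Finset.mem_Icc, hj, true_and]
  ring

/-- Critical-path computation for the lower-bound instance of Theorem 4: with
`N` jobs, all released at `δ`, where the special job `j` (task `τ₁`) has processing
time `Q - Q/M` and delivery time `Q/M + N·δ` and every other job has processing time
`δ` and delivery time `Q/M`, the delivery-makespan (critical path length of the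
dependency graph in which `τ₁`'s critical section is the `j`-th in the chain)
equals `j·δ + Q + N·δ`. -/
theorem lower_bound_instance_critical_path
    (M N : ℕ) (hM : 1 ≤ M) (hN : 1 ≤ N) (δ Q : ℝ) (hδ : 0 ≤ δ) (hQ : 0 ≤ Q)
    (j : ℕ) (hj1 : 1 ≤ j) (hjN : j ≤ N)
    (r p q : ℕ → ℝ)
    (hr : ∀ i, r i = δ)
    (hp : ∀ i, i ≠ j → p i = δ) (hpj : p j = Q - Q / M)
    (hq : ∀ i, i ≠ j → q i = Q / M) (hqj : q j = Q / M + N * δ) :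
    (Finset.Icc 1 N).sup' (Finset.nonempty_Icc.mpr hN)
        (fun i => complTime r p i + q i)
      = j * δ + Q + N * δ := by
  have hQM : Q / M ≤ Q := div_le_self hQ (by exact_mod_cast hM)
  have hF : ∀ i, 1 ≤ i →
      complTime r p i = (i + 1) * δ + if j ≤ i then Q - Q / M - δ else 0 := fun i hi => by
    rw [complTime_eq_of_release_eq_of_forall_ne hδ (by linarith) hj1 hr hp hi, hpj]
  refine le_antisymm (Finset.sup'_le _ _ fun i hi => ?_) ?_
  · obtain ⟨hi1, hiN⟩ := Finset.mem_Icc.mp hi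
    have hiδ : (i : ℝ) * δ ≤ N * δ := by gcongr
    rw [hF i hi1]
    rcases lt_trichotomy i j with hij | rfl | hij
    · have hjδ : ((i : ℝ) + 1) * δ ≤ j * δ := by gcongr; exact_mod_cast hij
      rw [if_neg (by omega), hq i hij.ne]
      linarith [mul_nonneg (Nat.cast_nonneg (α := ℝ) N) hδ]
    · rw [if_pos le_rfl, hqj]; linarith
    · rw [if_pos hij.le, hq i hij.ne']
      linarith [mul_nonneg (Nat.cast_nonneg (α := ℝ) j) hδ]
  · refine le_of_eq_of_le ?_ (Finset.le_sup' _ (Finset.mem_Icc.mpr ⟨hj1, hjN⟩))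
    rw [hF j hj1, if_pos le_rfl, hqj]
    ring
end

section
/- Let M ≥ 1 and N ≥ 1 be integers and δ ≥ 0, Q ≥ 0 reals. Consider the N jobs where job 1 has r_1 = δ, p_1 = Q − Q/M, q_1 = Q/M + N·δ and each job i ∈ {2,…,N} has r_i = δ, p_i = δ, q_i = Q/M. Then the minimum, over all permutations σ of {1,…,N}, of the delivery-makespan L_σ obtained by processing the jobs in the order σ equals (N+1)·δ + Q, and it is attained by any ordering that places job 1 first. -/
open Finset

lemma add_le_complTime (r p : ℕ → ℝ) {i : ℕ} (hi : 1 ≤ i) : r i + p i ≤ complTime r p i := by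
  match i, hi with
  | 1, _ => exact le_rfl
  | i + 2, _ =>
    rw [complTime]
    gcongr
    exact le_max_right _ _

lemma complTime_const_release (δ : ℝ) (p : ℕ → ℝ) {n : ℕ} (hn : 1 ≤ n)
    (hp : ∀ k ∈ Icc 1 n, 0 ≤ p k) :
    complTime (fun _ => δ) p n = δ + ∑ k ∈ Icc 1 n, p k := by
  induction n, hn using Nat.le_induction with
  | base => simp [complTime]
  | succ n hn ih =>
    obtain ⟨m, rfl⟩ : ∃ m, n = m + 1 := ⟨n - 1, by omega⟩
    have hF : complTime (fun _ => δ) p (m + 1) = δ + ∑ k ∈ Icc 1 (m + 1), p k :=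
      ih fun k hk => hp k (Icc_subset_Icc_right (by omega) hk)
    have hsum : 0 ≤ ∑ k ∈ Icc 1 (m + 1), p k :=
      sum_nonneg fun k hk => hp k (Icc_subset_Icc_right (by omega) hk)
    rw [complTime, hF, max_eq_left (by linarith), sum_Icc_succ_top (by omega : 1 ≤ m + 2)]
    ring

lemma complTime_const_release_of_tail_const (δ : ℝ) (p : ℕ → ℝ) (hδ : 0 ≤ δ) (hp₁ : 0 ≤ p 1)
    (hp : ∀ k, 1 < k → p k = δ) {n : ℕ} (hn : 1 ≤ n) :
    complTime (fun _ => δ) p n = n * δ + p 1 := by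
  have hp_nonneg : ∀ k ∈ Icc 1 n, 0 ≤ p k := fun k hk => by
    rcases (mem_Icc.1 hk).1.eq_or_lt with rfl | hk1
    · exact hp₁
    · exact (hp k hk1).symm ▸ hδ
  have htail : ∑ k ∈ Ioc 1 n, p k = (n - 1) * δ := by
    rw [sum_congr rfl fun k hk => hp k (mem_Ioc.1 hk).1, sum_const, Nat.card_Ioc, nsmul_eq_mul,
      Nat.cast_sub hn, Nat.cast_one]
  rw [complTime_const_release δ p hn hp_nonneg, Icc_eq_cons_Ioc hn, sum_cons, htail]
  ring

lemma Equiv.Perm.exists_mem_apply_eq_of_mapsTo {α : Type*} (σ : Equiv.Perm α) {s : Finset α}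
    (hσ : ∀ i ∈ s, σ i ∈ s) {y : α} (hy : y ∈ s) : ∃ x ∈ s, σ x = y :=
  surjOn_of_injOn_of_card_le σ (fun i hi => hσ i hi) σ.injective.injOn le_rfl hy

/-- Optimal dependency graph for the lower-bound instance of Theorem 4: for the `N`
jobs where job `1` has `r = δ`, `p = Q - Q/M`, `q = Q/M + N·δ` and every other job has
`r = δ`, `p = δ`, `q = Q/M`, the minimum over all permutations `σ` of `{1, …, N}` of the
delivery-makespan `L_σ` (obtained by processing the jobs in the order `σ 1, …, σ N`)
equals `(N+1)·δ + Q`, and it is attained by any ordering that places job `1` first. -/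
theorem lower_bound_instance_optimal_order
    (M N : ℕ) (hM : 1 ≤ M) (hN : 1 ≤ N) (δ Q : ℝ) (hδ : 0 ≤ δ) (hQ : 0 ≤ Q)
    (r p q : ℕ → ℝ)
    (hr : ∀ i, r i = δ)
    (hp : ∀ i, i ≠ 1 → p i = δ) (hp1 : p 1 = Q - Q / M)
    (hq : ∀ i, i ≠ 1 → q i = Q / M) (hq1 : q 1 = Q / M + N * δ) :
    (∀ σ : Equiv.Perm ℕ, (∀ i ∈ Finset.Icc 1 N, σ i ∈ Finset.Icc 1 N) →
        (N + 1) * δ + Q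
          ≤ (Finset.Icc 1 N).sup' (Finset.nonempty_Icc.mpr hN)
              (fun i => complTime (fun k => r (σ k)) (fun k => p (σ k)) i + q (σ i))) ∧
    (∀ σ : Equiv.Perm ℕ, (∀ i ∈ Finset.Icc 1 N, σ i ∈ Finset.Icc 1 N) → σ 1 = 1 →
        (Finset.Icc 1 N).sup' (Finset.nonempty_Icc.mpr hN)
            (fun i => complTime (fun k => r (σ k)) (fun k => p (σ k)) i + q (σ i))
          = (N + 1) * δ + Q) := by
  have hQM : Q / M ≤ Q := div_le_self hQ (by exact_mod_cast hM)
  have lower : ∀ σ : Equiv.Perm ℕ, (∀ i ∈ Icc 1 N, σ i ∈ Icc 1 N) → (N + 1) * δ + Q ≤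
      (Icc 1 N).sup' (nonempty_Icc.mpr hN)
        (fun i => complTime (fun k => r (σ k)) (fun k => p (σ k)) i + q (σ i)) := by
    intro σ hσ
    obtain ⟨j, hj, hσj⟩ := σ.exists_mem_apply_eq_of_mapsTo hσ (left_mem_Icc.2 hN)
    have hFj : r (σ j) + p (σ j) ≤ complTime (fun k => r (σ k)) (fun k => p (σ k)) j :=
      add_le_complTime (fun k => r (σ k)) (fun k => p (σ k)) (mem_Icc.1 hj).1
    rw [hσj, hr, hp1] at hFj
    refine le_trans ?_ (le_sup' _ hj)
    simp only [hσj, hq1]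
    linarith
  refine ⟨lower, fun σ hσ hσ1 => le_antisymm (sup'_le _ _ fun i hi => ?_) (lower σ hσ)⟩
  obtain ⟨hi1, hiN⟩ := mem_Icc.1 hi
  have hF : complTime (fun k => r (σ k)) (fun k => p (σ k)) i = i * δ + (Q - Q / M) := by
    simp only [hr]
    rw [complTime_const_release_of_tail_const δ _ hδ (by rw [hσ1, hp1]; linarith)
      (fun k hk => hp _ (hσ1 ▸ σ.injective.ne hk.ne')) hi1, hσ1, hp1]
  rw [hF]
  rcases hi1.eq_or_lt with rfl | hi1
  · rw [hσ1, hq1]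
    push_cast
    linarith
  · rw [hq _ (hσ1 ▸ σ.injective.ne hi1.ne')]
    have : (i : ℝ) * δ ≤ N * δ := by gcongr
    linarith
end
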